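/- arXiv:1505.06344 — 2 statements merged into one kernel-verified Lean document; each statement's English description precedes it below -/
import Mathlib

section
/- (Double-sum refined Jensen inequality, Lemma 3.2) Let R ∈ ℝ^{n×n} be symmetric positive definite, a < b integers, ℓ = b - a + 1 > 1, and u : ℤ[a,b] → ℝ^n. Define υ₂ = ∑_{k=a}^{b} ∑_{s=a}^{k} u_s, υ₃ = ∑_{k=a}^{b} ∑_{s=a}^{k} ∑_{i=a}^{s} u_i, and ζ₄ = υ₂ - (3/(ℓ+2))υ₃. Then ∑_{k=a}^{b} ∑_{s=a}^{k} u_s^T R u_s - (2/(ℓ(ℓ+1))) υ₂^T R υ₂ ≥ (16(ℓ+2)/(ℓ(ℓ²-1))) ζ₄^T R ζ₄. -/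
/-!
Exchanging the order of summation turns the double sums into single sums with the weight
`t s = b - s + 1` on `s ∈ [a, b]`: `υ₂ = ∑ t s • u s` and `υ₃ = ∑ (t s (t s + 1) / 2) • u s`.
For this weight the functions `1` and `2ℓ + 1 - 3t` are orthogonal, their moments against `u` are
`υ₂` and `(2ℓ + 4) υ₂ - 6 υ₃ = 2(ℓ + 2) ζ₄`, and their squared norms are `ℓ(ℓ + 1)/2` and
`ℓ(ℓ + 1)(ℓ + 2)(ℓ - 1)/4`. The inequality is Bessel's inequality for these two functions in the
`t`-weighted inner product defined by `R`.
-/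

open Finset Matrix

theorem Matrix.PosSemidef.quadForm_div_add_quadForm_div_le {ι m : Type*} [Fintype m]
    {R : Matrix m m ℝ} (hR : R.PosSemidef) (S : Finset ι) (w p q : ι → ℝ) (u : ι → m → ℝ)
    {x y : m → ℝ} (hx : ∑ i ∈ S, (w i * p i) • u i = x) (hy : ∑ i ∈ S, (w i * q i) • u i = y)
    (hw : ∀ i ∈ S, 0 ≤ w i) (hpq : ∑ i ∈ S, w i * p i * q i = 0)
    (hp : ∑ i ∈ S, w i * p i ^ 2 ≠ 0) (hq : ∑ i ∈ S, w i * q i ^ 2 ≠ 0) :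
    x ⬝ᵥ R *ᵥ x / ∑ i ∈ S, w i * p i ^ 2 + y ⬝ᵥ R *ᵥ y / ∑ i ∈ S, w i * q i ^ 2 ≤
      ∑ i ∈ S, w i * (u i ⬝ᵥ R *ᵥ u i) := by
  set A := ∑ i ∈ S, w i * p i ^ 2
  set B := ∑ i ∈ S, w i * q i ^ 2
  have hsymm (v v' : m → ℝ) : v ⬝ᵥ R *ᵥ v' = v' ⬝ᵥ R *ᵥ v := by
    rw [dotProduct_mulVec, ← mulVec_transpose, ← conjTranspose_eq_transpose_of_trivial,
      hR.isHermitian.eq, dotProduct_comm]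
  have hpair (c : ι → ℝ) (v : m → ℝ) :
      ∑ i ∈ S, c i * (u i ⬝ᵥ R *ᵥ v) = (∑ i ∈ S, c i • u i) ⬝ᵥ R *ᵥ v := by
    simp [sum_dotProduct, smul_dotProduct]
  set r : ι → m → ℝ := fun i => u i - (p i / A) • x - (q i / B) • y
  have hr : 0 ≤ ∑ i ∈ S, w i * (r i ⬝ᵥ R *ᵥ r i) :=
    sum_nonneg fun i hi => mul_nonneg (hw i hi) (by simpa using hR.dotProduct_mulVec_nonneg (r i))
  have hexpand (i : ι) : w i * (r i ⬝ᵥ R *ᵥ r i) =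
      w i * (u i ⬝ᵥ R *ᵥ u i) - 2 / A * (w i * p i * (u i ⬝ᵥ R *ᵥ x))
        - 2 / B * (w i * q i * (u i ⬝ᵥ R *ᵥ y)) + x ⬝ᵥ R *ᵥ x / A ^ 2 * (w i * p i ^ 2)
        + 2 * (x ⬝ᵥ R *ᵥ y) / (A * B) * (w i * p i * q i)
        + y ⬝ᵥ R *ᵥ y / B ^ 2 * (w i * q i ^ 2) := by
    simp only [r, sub_dotProduct, dotProduct_sub, smul_dotProduct, dotProduct_smul, mulVec_sub,
      mulVec_smul, smul_eq_mul]
    rw [hsymm x (u i), hsymm y (u i), hsymm y x]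
    ring
  have hresidual : ∑ i ∈ S, w i * (r i ⬝ᵥ R *ᵥ r i) =
      ∑ i ∈ S, w i * (u i ⬝ᵥ R *ᵥ u i) - x ⬝ᵥ R *ᵥ x / A - y ⬝ᵥ R *ᵥ y / B := by
    simp only [hexpand, sum_add_distrib, sum_sub_distrib, ← mul_sum, hpair, hx, hy, hpq]
    field_simp
    ring
  linarith

theorem sum_Icc_eq_of_forward_diff (F g : ℝ → ℝ) (hF0 : F 0 = 0)
    (hF : ∀ x, F (x + 1) = F x + g (x + 1)) {a b : ℤ} (hab : a ≤ b + 1) :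
    ∑ s ∈ Icc a b, g ((b : ℝ) - s + 1) = F ((b : ℝ) - a + 1) := by
  induction a, hab using Int.leInductionDown with
  | base => simp [hF0]
  | pred a ha ih =>
    rw [← insert_Icc_left_eq_Icc_sub_one (by omega), sum_insert (by simp), ih, Int.cast_sub,
      Int.cast_one, show (b : ℝ) - (a - 1) + 1 = (b - a + 1) + 1 by ring, hF (b - a + 1), add_comm]

section Weights

variable {a b : ℤ} {ℓ : ℝ}

theorem sum_Icc_sub_add_one (hab : a ≤ b + 1) (hℓ : ℓ = (b : ℝ) - a + 1) :
    ∑ s ∈ Icc a b, ((b : ℝ) - s + 1) = ℓ * (ℓ + 1) / 2 :=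
  hℓ ▸ sum_Icc_eq_of_forward_diff (fun x => x * (x + 1) / 2) (fun x => x) (by simp)
    (fun x => by ring) hab

theorem sum_Icc_sub_add_one_mul_orthogonal (hab : a ≤ b + 1) (hℓ : ℓ = (b : ℝ) - a + 1) :
    ∑ s ∈ Icc a b, ((b : ℝ) - s + 1) * (2 * ℓ + 1 - 3 * ((b : ℝ) - s + 1)) = 0 :=
  (sum_Icc_eq_of_forward_diff (fun x => x * (x + 1) * (ℓ - x))
    (fun x => x * (2 * ℓ + 1 - 3 * x)) (by simp) (fun x => by ring) hab).trans
    (by rw [← hℓ]; ring)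

theorem sum_Icc_sub_add_one_mul_orthogonal_sq (hab : a ≤ b + 1) (hℓ : ℓ = (b : ℝ) - a + 1) :
    ∑ s ∈ Icc a b, ((b : ℝ) - s + 1) * (2 * ℓ + 1 - 3 * ((b : ℝ) - s + 1)) ^ 2 =
      ℓ * (ℓ + 1) * (ℓ + 2) * (ℓ - 1) / 4 :=
  (sum_Icc_eq_of_forward_diff
    (fun x => (2 * ℓ + 1) ^ 2 * (x * (x + 1) / 2) - (2 * ℓ + 1) * (x * (x + 1) * (2 * x + 1))
      + 9 * (x * (x + 1) / 2) ^ 2)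
    (fun x => x * (2 * ℓ + 1 - 3 * x) ^ 2) (by simp) (fun x => by ring) hab).trans
    (by rw [← hℓ]; ring)

end Weights

theorem sum_Icc_sum_Icc_comm {M : Type*} [AddCommMonoid M] (a b : ℤ) (f : ℤ → ℤ → M) :
    ∑ k ∈ Icc a b, ∑ s ∈ Icc a k, f k s = ∑ s ∈ Icc a b, ∑ k ∈ Icc s b, f k s :=
  sum_comm' (by intro x y; simp only [mem_Icc]; omega)

section IteratedSums

variable {M : Type*} [AddCommMonoid M] [Module ℝ M]

theorem sum_Icc_sum_Icc_smul (a b : ℤ) (c : ℤ → ℝ) (f : ℤ → M) :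
    ∑ k ∈ Icc a b, ∑ s ∈ Icc a k, c k • f s = ∑ s ∈ Icc a b, (∑ k ∈ Icc s b, c k) • f s := by
  simp_rw [sum_Icc_sum_Icc_comm a b, sum_smul]

theorem sum_Icc_sum_Icc_eq_sum_smul (a b : ℤ) (f : ℤ → M) :
    ∑ k ∈ Icc a b, ∑ s ∈ Icc a k, f s = ∑ s ∈ Icc a b, ((b : ℝ) - s + 1) • f s := by
  have h := sum_Icc_sum_Icc_smul a b (fun _ => 1) f
  simp only [one_smul] at h
  rw [h]
  refine sum_congr rfl fun s hs => ?_
  rw [sum_Icc_eq_of_forward_diff id (fun _ => 1) rfl (fun _ => rfl) (by grind)]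
  rfl

theorem sum_Icc_sum_Icc_sum_Icc_eq_sum_smul (a b : ℤ) (f : ℤ → M) :
    ∑ k ∈ Icc a b, ∑ s ∈ Icc a k, ∑ i ∈ Icc a s, f i =
      ∑ i ∈ Icc a b, (((b : ℝ) - i + 1) * ((b : ℝ) - i + 2) / 2) • f i := by
  simp_rw [sum_Icc_sum_Icc_eq_sum_smul a b, smul_sum]
  rw [sum_Icc_sum_Icc_smul a b (fun s => (b : ℝ) - s + 1) f]
  refine sum_congr rfl fun i hi => ?_
  rw [sum_Icc_sub_add_one (by grind) rfl]
  ring_nf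

theorem sum_Icc_sub_add_one_mul_smul {M : Type*} [AddCommGroup M] [Module ℝ M] (a b : ℤ) (c : ℝ)
    (f : ℤ → M) :
    ∑ s ∈ Icc a b, (((b : ℝ) - s + 1) * (c - 3 * ((b : ℝ) - s + 1))) • f s =
      (c + 3) • ∑ k ∈ Icc a b, ∑ s ∈ Icc a k, f s -
        (6 : ℝ) • ∑ k ∈ Icc a b, ∑ s ∈ Icc a k, ∑ i ∈ Icc a s, f i := by
  rw [sum_Icc_sum_Icc_eq_sum_smul, sum_Icc_sum_Icc_sum_Icc_eq_sum_smul, smul_sum, smul_sum,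
    ← sum_sub_distrib]
  refine sum_congr rfl fun s _ => ?_
  rw [smul_smul, smul_smul, ← sub_smul]
  ring_nf

theorem refined_jensen_double_general
    (n : ℕ) (R : Matrix (Fin n) (Fin n) ℝ) (hR : R.PosDef)
    (a b : ℤ) (hab : a < b) (u : ℤ → (Fin n → ℝ)) :
    ∀ (ℓ : ℝ), ℓ = (b : ℝ) - a + 1 →
    ∀ (υ₂ υ₃ ζ₄ : Fin n → ℝ),
      υ₂ = ∑ k ∈ Finset.Icc a b, ∑ s ∈ Finset.Icc a k, u s →
      υ₃ = ∑ k ∈ Finset.Icc a b, ∑ s ∈ Finset.Icc a k, ∑ i ∈ Finset.Icc a s, u i →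
      ζ₄ = υ₂ - (3 / (ℓ + 2)) • υ₃ →
      ∑ k ∈ Finset.Icc a b, ∑ s ∈ Finset.Icc a k, (u s) ⬝ᵥ R.mulVec (u s) -
          (2 / (ℓ * (ℓ + 1))) * (υ₂ ⬝ᵥ R.mulVec υ₂) ≥
        (16 * (ℓ + 2) / (ℓ * (ℓ ^ 2 - 1))) * (ζ₄ ⬝ᵥ R.mulVec ζ₄) := by
  intro ℓ hℓ υ₂ υ₃ ζ₄ h₂ h₃ h₄
  have hℓ2 : 2 ≤ ℓ := by
    have : (a : ℝ) + 1 ≤ b := by exact_mod_cast hab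
    linarith
  have hℓ1 : 0 < ℓ - 1 := by linarith
  have hab₁ : a ≤ b + 1 := by omega
  have hζ₄ : ∑ s ∈ Icc a b, (((b : ℝ) - s + 1) * (2 * ℓ + 1 - 3 * ((b : ℝ) - s + 1))) • u s =
      (2 * (ℓ + 2)) • ζ₄ := by
    rw [sum_Icc_sub_add_one_mul_smul, ← h₂, ← h₃, h₄, smul_sub, smul_smul]
    congr 2
    · ring
    · field_simp
      norm_num
  have hbessel := hR.posSemidef.quadForm_div_add_quadForm_div_le (Icc a b)
    (fun s => (b : ℝ) - s + 1) (fun _ => 1) (fun s => 2 * ℓ + 1 - 3 * ((b : ℝ) - s + 1)) u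
    (x := υ₂) (by simp only [mul_one, h₂, sum_Icc_sum_Icc_eq_sum_smul]) hζ₄
    (fun s hs => by linarith [show (s : ℝ) ≤ b by exact_mod_cast (mem_Icc.mp hs).2])
    (by simpa only [mul_one] using sum_Icc_sub_add_one_mul_orthogonal hab₁ hℓ)
    (by simp only [one_pow, mul_one, sum_Icc_sub_add_one hab₁ hℓ]; positivity)
    (by rw [sum_Icc_sub_add_one_mul_orthogonal_sq hab₁ hℓ]; positivity)
  simp only [one_pow, mul_one, sum_Icc_sub_add_one hab₁ hℓ,
    sum_Icc_sub_add_one_mul_orthogonal_sq hab₁ hℓ, mulVec_smul, dotProduct_smul, smul_dotProduct,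
    smul_eq_mul] at hbessel
  rw [sum_Icc_sum_Icc_eq_sum_smul, ge_iff_le, le_sub_iff_add_le']
  simp only [smul_eq_mul]
  have : ℓ ^ 2 - 1 ≠ 0 := by nlinarith
  convert hbessel using 2
  · field_simp
  · field_simp
    ring

theorem refined_jensen_double
    (n : ℕ) (R : Matrix (Fin n) (Fin n) ℝ) (hR : R.PosDef) (hRsym : R.IsSymm)
    (a b : ℤ) (hab : a < b) (u : ℤ → (Fin n → ℝ)) :
    ∀ (ℓ : ℝ), ℓ = (b : ℝ) - a + 1 →
    ∀ (υ₂ υ₃ ζ₄ : Fin n → ℝ),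
      υ₂ = ∑ k ∈ Finset.Icc a b, ∑ s ∈ Finset.Icc a k, u s →
      υ₃ = ∑ k ∈ Finset.Icc a b, ∑ s ∈ Finset.Icc a k, ∑ i ∈ Finset.Icc a s, u i →
      ζ₄ = υ₂ - (3 / (ℓ + 2)) • υ₃ →
      ∑ k ∈ Finset.Icc a b, ∑ s ∈ Finset.Icc a k, (u s) ⬝ᵥ R.mulVec (u s) -
          (2 / (ℓ * (ℓ + 1))) * (υ₂ ⬝ᵥ R.mulVec υ₂) ≥
        (16 * (ℓ + 2) / (ℓ * (ℓ ^ 2 - 1))) * (ζ₄ ⬝ᵥ R.mulVec ζ₄) :=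
  refined_jensen_double_general n R hR a b hab u
end IteratedSums
end

section
/- (Scalar refined Jensen inequality) Let a < b be integers, ℓ = b - a + 1 ≥ 2, and u : ℤ[a,b] → ℝ. With υ₁ = ∑_{k=a}^{b} u_k and υ₂ = ∑_{k=a}^{b} ∑_{s=a}^{k} u_s and ζ₁ = υ₁ - (2/(ℓ+1))υ₂, one has ∑_{k=a}^{b} u_k² ≥ (1/ℓ) υ₁² + (3(ℓ+1)/(ℓ(ℓ-1))) ζ₁². -/
/-!
With `p k = 2k - a - b`, one has `(ℓ + 1) υ₁ - 2 υ₂ = ∑ p k u k`, so `ζ₁` is, up to the factor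
`1/(ℓ+1)`, the inner product of `u` with `p`. On `[a, b]` the vectors `1` and `p` are orthogonal,
with squared norms `ℓ` and `ℓ (ℓ² - 1) / 3`, and the inequality is Bessel's inequality for `u`
against these two vectors.
-/

open Finset

theorem sum_mul_sq_div_add_sum_mul_sq_div_le {ι : Type*} (s : Finset ι) (g e f : ι → ℝ)
    (hef : ∑ i ∈ s, e i * f i = 0) :
    (∑ i ∈ s, e i * g i) ^ 2 / ∑ i ∈ s, e i ^ 2 + (∑ i ∈ s, f i * g i) ^ 2 / ∑ i ∈ s, f i ^ 2
      ≤ ∑ i ∈ s, g i ^ 2 := by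
  set A := ∑ i ∈ s, e i * g i
  set B := ∑ i ∈ s, f i * g i
  set E := ∑ i ∈ s, e i ^ 2
  set F := ∑ i ∈ s, f i ^ 2
  have hres : 0 ≤ ∑ i ∈ s, (g i - A / E * e i - B / F * f i) ^ 2 := by positivity
  have hexpand : ∑ i ∈ s, (g i - A / E * e i - B / F * f i) ^ 2
      = ∑ i ∈ s, g i ^ 2 - (2 * (A / E) * A - (A / E) ^ 2 * E)
        - (2 * (B / F) * B - (B / F) ^ 2 * F) + 2 * (A / E) * (B / F) * ∑ i ∈ s, e i * f i := by
    simp only [A, B, E, F, mul_sum, ← sum_sub_distrib, ← sum_add_distrib]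
    exact sum_congr rfl fun i _ => by ring
  have hproj : ∀ x y : ℝ, 2 * (x / y) * x - (x / y) ^ 2 * y = x ^ 2 / y := by
    intro x y
    rcases eq_or_ne y 0 with rfl | hy
    · simp
    · field_simp
      ring
  rw [hexpand, hef, hproj, hproj] at hres
  linarith

theorem sum_Icc_eq_sub_of_sub_eq {M : Type*} [AddCommGroup M] {a b : ℤ} (hab : a ≤ b + 1)
    (f F : ℤ → M) (hF : ∀ k, F k - F (k - 1) = f k) :
    ∑ k ∈ Icc a b, f k = F b - F (a - 1) := by
  induction b, (by omega : a - 1 ≤ b) using Int.leInduction with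
  | base => simp
  | succ b hb ih =>
    rw [← insert_Icc_right_eq_Icc_add_one (by omega), sum_insert (by simp), ih (by omega),
      ← hF (b + 1), add_sub_cancel_right]
    abel

theorem sum_Icc_centered_eq_zero {a b : ℤ} (hab : a ≤ b + 1) :
    ∑ k ∈ Icc a b, (2 * k - a - b : ℝ) = 0 := by
  rw [sum_Icc_eq_sub_of_sub_eq hab _ (fun k : ℤ => (k : ℝ) * (k + 1) - (a + b) * k)
    (fun k => by push_cast; ring)]
  push_cast
  ring

theorem sum_Icc_centered_sq {a b : ℤ} (hab : a ≤ b + 1) :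
    ∑ k ∈ Icc a b, (2 * k - a - b : ℝ) ^ 2 = (b - a + 1) * ((b - a + 1) ^ 2 - 1) / 3 := by
  rw [sum_Icc_eq_sub_of_sub_eq hab _
    (fun k : ℤ => 2 * (k : ℝ) * (k + 1) * (2 * k + 1) / 3 - 2 * (a + b) * k * (k + 1)
      + (a + b) ^ 2 * k)
    (fun k => by push_cast; ring)]
  push_cast
  ring

theorem cast_card_Icc {a b : ℤ} (hab : a ≤ b + 1) : ((Icc a b).card : ℝ) = b - a + 1 := by
  rw [Int.card_Icc, ← Int.cast_natCast, Int.toNat_of_nonneg (by omega)]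
  push_cast
  ring

theorem sum_Icc_sum_Icc_eq_sum_mul (a b : ℤ) (u : ℤ → ℝ) :
    ∑ k ∈ Icc a b, ∑ s ∈ Icc a k, u s = ∑ s ∈ Icc a b, (b - s + 1) * u s := by
  rw [sum_comm' (t' := Icc a b) (s' := fun s => Icc s b) (by intro k s; simp only [mem_Icc]; omega)]
  refine sum_congr rfl fun s hs => ?_
  rw [sum_const, nsmul_eq_mul, cast_card_Icc (by simp only [mem_Icc] at hs; omega)]

theorem refined_jensen_scalar
    (a b : ℤ) (hab : a < b) (u : ℤ → ℝ) :
    ∀ (ℓ : ℝ), ℓ = (b : ℝ) - a + 1 →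
    ∀ (υ₁ υ₂ ζ₁ : ℝ),
      υ₁ = ∑ k ∈ Finset.Icc a b, u k →
      υ₂ = ∑ k ∈ Finset.Icc a b, ∑ s ∈ Finset.Icc a k, u s →
      ζ₁ = υ₁ - (2 / (ℓ + 1)) * υ₂ →
      ∑ k ∈ Finset.Icc a b, (u k) ^ 2 ≥ (1 / ℓ) * υ₁ ^ 2 +
        (3 * (ℓ + 1) / (ℓ * (ℓ - 1))) * ζ₁ ^ 2 := by
  intro ℓ hℓ υ₁ υ₂ ζ₁ h₁ h₂ hζ
  have hℓ₁ : 1 < ℓ := by rw [hℓ, lt_add_iff_pos_left, sub_pos]; exact_mod_cast hab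
  set P := ∑ k ∈ Icc a b, (2 * k - a - b : ℝ) * u k
  have hP : (ℓ + 1) * υ₁ - 2 * υ₂ = P := by
    rw [h₁, h₂, sum_Icc_sum_Icc_eq_sum_mul, mul_sum, mul_sum, ← sum_sub_distrib]
    exact sum_congr rfl fun k _ => by rw [hℓ]; ring
  have hbessel := sum_mul_sq_div_add_sum_mul_sq_div_le (Icc a b) u 1 (fun k => 2 * k - a - b)
    (by simpa using sum_Icc_centered_eq_zero (by omega : a ≤ b + 1))
  simp only [Pi.one_apply, one_mul, one_pow, sum_const, nsmul_eq_mul, mul_one,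
    cast_card_Icc (by omega : a ≤ b + 1), sum_Icc_centered_sq (by omega : a ≤ b + 1), ← h₁,
    ← hℓ] at hbessel
  have hℓ0 : ℓ ≠ 0 := by positivity
  have hℓm1 : ℓ - 1 ≠ 0 := by linarith
  have hℓp1 : ℓ + 1 ≠ 0 := by positivity
  have hℓsq : ℓ ^ 2 - 1 ≠ 0 := by nlinarith
  calc 1 / ℓ * υ₁ ^ 2 + 3 * (ℓ + 1) / (ℓ * (ℓ - 1)) * ζ₁ ^ 2
      = υ₁ ^ 2 / ℓ + P ^ 2 / (ℓ * (ℓ ^ 2 - 1) / 3) := by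
        rw [hζ, ← hP]
        field_simp
        ring
    _ ≤ _ := hbessel
end
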